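/- arXiv:1702.00429 — 6 statements merged into one kernel-verified Lean document; each statement's English description precedes it below -/
import Mathlib

section
/- Let L be an origin-symmetric star body in ℝ² and let k be a positive even integer. Suppose there are homogeneous polynomials P and Q in two variables, of degrees k and k+2 respectively, such that ‖(u,v)‖_L^k = P(u,v) and ‖(u,v)‖_L^{k+2} = Q(u,v) for all (u,v) ∈ ℝ². Then L is an ellipse; that is, ‖·‖_L² is a positive definite quadratic form on ℝ². -/
/-!
Both `Q ^ k` and `P ^ (k + 2)` evaluate to `‖x‖_L ^ (k (k + 2))`, so they agree as
polynomials. Since the polynomial ring is integrally closed, `P ∣ Q`, and the quotient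
`D = Q / P` is homogeneous of degree 2. Cancelling `‖x‖_L ^ k = P(x) ≠ 0` gives
`‖x‖_L ^ 2 = D(x)`, and a homogeneous quadratic polynomial is a quadratic form, positive
definite because the gauge is positive.
-/

open MvPolynomial

theorem MvPolynomial.IsHomogeneous.exists_quadraticMap_eval_eq {σ R : Type*} [CommSemiring R]
    {p : MvPolynomial σ R} (hp : p.IsHomogeneous 2) :
    ∃ B : QuadraticMap R (σ → R) R, ∀ x, B x = eval x p := by
  rw [← mem_homogeneousSubmodule, ← homogeneousSubmodule_one_pow,
    homogeneousSubmodule_one_eq_span_X, pow_two, Submodule.span_mul_span] at hp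
  induction hp using Submodule.span_induction with
  | mem q hq =>
    obtain ⟨_, ⟨i, rfl⟩, _, ⟨j, rfl⟩, rfl⟩ := hq
    exact ⟨QuadraticMap.proj i j, fun x => by simp⟩
  | zero => exact ⟨0, fun x => by simp⟩
  | add q r _ _ hq hr =>
    obtain ⟨B, hB⟩ := hq
    obtain ⟨C, hC⟩ := hr
    exact ⟨B + C, fun x => by simp [hB, hC]⟩
  | smul a q _ hq =>
    obtain ⟨B, hB⟩ := hq
    exact ⟨a • B, fun x => by simp [hB]⟩

attribute [local instance] MvPolynomial.gradedAlgebra in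
theorem MvPolynomial.IsHomogeneous.of_mul_left {σ R : Type*} [CommRing R] [IsDomain R]
    {p q : MvPolynomial σ R} {m n : ℕ} (hp : p.IsHomogeneous m) (hp0 : p ≠ 0)
    (hpq : (p * q).IsHomogeneous (m + n)) : q.IsHomogeneous n := by
  -- `p` times the degree-`n` component of `q` is the degree-`(m + n)` component of `p * q`.
  have key := DirectSum.coe_decompose_mul_add_of_left_mem
    (homogeneousSubmodule σ R) (b := q) (j := n) hp
  rw [DirectSum.decompose_of_mem_same _ hpq] at key
  rw [mul_left_cancel₀ hp0 key]
  exact (DirectSum.decompose (homogeneousSubmodule σ R) q n).2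

theorem planar_star_body_with_two_polynomial_powers_is_ellipse_general
    (L : Set (EuclideanSpace ℝ (Fin 2)))
    (hgauge_pos : ∀ x : EuclideanSpace ℝ (Fin 2), x ≠ 0 → 0 < gauge L x)
    (k : ℕ) (hk : 0 < k)
    (P Q : MvPolynomial (Fin 2) ℝ)
    (hP : P.IsHomogeneous k) (hQ : Q.IsHomogeneous (k + 2))
    (hPL : ∀ x : EuclideanSpace ℝ (Fin 2),
      gauge L x ^ k = MvPolynomial.eval (fun i => x i) P)
    (hQL : ∀ x : EuclideanSpace ℝ (Fin 2),
      gauge L x ^ (k + 2) = MvPolynomial.eval (fun i => x i) Q) :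
    ∃ B : QuadraticForm ℝ (EuclideanSpace ℝ (Fin 2)), B.PosDef ∧
      ∀ x : EuclideanSpace ℝ (Fin 2), gauge L x ^ 2 = B x := by
  have hQP : Q ^ k = P ^ (k + 2) := MvPolynomial.funext fun x => by
    simp only [map_pow]
    rw [← hPL (WithLp.toLp 2 x), ← hQL (WithLp.toLp 2 x), ← pow_mul, ← pow_mul, mul_comm]
  have hP0 : P ≠ 0 := by
    rintro rfl
    have hx : EuclideanSpace.single (0 : Fin 2) (1 : ℝ) ≠ 0 := by simp
    simpa [(hgauge_pos _ hx).ne'] using hPL (EuclideanSpace.single 0 1)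
  obtain ⟨D, rfl⟩ : P ∣ Q :=
    (IsIntegrallyClosed.pow_dvd_pow_iff hk.ne').mp (hQP ▸ pow_dvd_pow P (by omega))
  obtain ⟨B, hB⟩ := (hP.of_mul_left hP0 hQ).exists_quadraticMap_eval_eq
  have hgauge_sq : ∀ x : EuclideanSpace ℝ (Fin 2), gauge L x ^ 2 = B x := by
    intro x
    rcases eq_or_ne x 0 with rfl | hx
    · simp
    · have h := hQL x
      rw [map_mul, ← hPL, pow_add, ← hB] at h
      exact mul_left_cancel₀ (pow_pos (hgauge_pos x hx) k).ne' h
  refine ⟨B.comp (WithLp.linearEquiv 2 ℝ (Fin 2 → ℝ)).toLinearMap, fun x hx => ?_, hgauge_sq⟩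
  exact (hgauge_sq x).symm ▸ pow_pos (hgauge_pos x hx) 2

/-- Let `L` be an origin-symmetric star body in `ℝ²` and `k` a positive even integer.
If there are homogeneous polynomials `P`, `Q` in two variables of degrees `k` and `k + 2`
with `‖x‖_L ^ k = P(x)` and `‖x‖_L ^ (k+2) = Q(x)` for all `x ∈ ℝ²`, then `L` is an
ellipse: `‖·‖_L²` is a positive definite quadratic form on `ℝ²`. -/
theorem planar_star_body_with_two_polynomial_powers_is_ellipse
    (L : Set (EuclideanSpace ℝ (Fin 2)))
    (hcomp : IsCompact L) (hstar : StarConvex ℝ 0 L)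
    (hgauge_pos : ∀ x : EuclideanSpace ℝ (Fin 2), x ≠ 0 → 0 < gauge L x)
    (hgauge_cont : ContinuousOn (gauge L) {(0 : EuclideanSpace ℝ (Fin 2))}ᶜ)
    (hsym : L = -L)
    (k : ℕ) (hk : 0 < k) (hke : Even k)
    (P Q : MvPolynomial (Fin 2) ℝ)
    (hP : P.IsHomogeneous k) (hQ : Q.IsHomogeneous (k + 2))
    (hPL : ∀ x : EuclideanSpace ℝ (Fin 2),
      gauge L x ^ k = MvPolynomial.eval (fun i => x i) P)
    (hQL : ∀ x : EuclideanSpace ℝ (Fin 2),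
      gauge L x ^ (k + 2) = MvPolynomial.eval (fun i => x i) Q) :
    ∃ B : QuadraticForm ℝ (EuclideanSpace ℝ (Fin 2)), B.PosDef ∧
      ∀ x : EuclideanSpace ℝ (Fin 2), gauge L x ^ 2 = B x :=
  planar_star_body_with_two_polynomial_powers_is_ellipse_general L hgauge_pos k hk P Q hP hQ hPL hQL
end

section
/- Let P, P', Q, Q' be real polynomial functions on ℝⁿ such that Q and Q' are non-negative everywhere and Q' is not the square of a polynomial. If P(x) + √(Q(x)) = P'(x) + √(Q'(x)) for all x ∈ ℝⁿ, then P = P' and Q = Q'. -/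
open MvPolynomial

/-- In a UFD of characteristic zero, if `4 D² Q' = E²` with `D ≠ 0`, then `Q'` is a square. -/
lemma aux_sq_of_four_sq {R : Type*} [CommRing R] [IsDomain R] [UniqueFactorizationMonoid R]
    [CharZero R] (D E Q' : R) (hD0 : D ≠ 0) (key : 4 * D ^ 2 * Q' = E ^ 2) :
    ∃ S : R, Q' = S ^ 2 := by
  let K := FractionRing R
  have hinj : Function.Injective (algebraMap R K) := IsFractionRing.injective R K
  have h2D : (2 : R) * D ≠ 0 := mul_ne_zero two_ne_zero hD0
  have h2d : (algebraMap R K) (2 * D) ≠ 0 := fun hc => h2D (hinj (by simpa using hc))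
  set x : K := (algebraMap R K) E / (algebraMap R K) (2 * D) with hxdef
  have hkeyK : 4 * (algebraMap R K) D ^ 2 * (algebraMap R K) Q'
      = (algebraMap R K) E ^ 2 := by
    have := congrArg (algebraMap R K) key
    simpa [map_mul, map_pow, map_ofNat] using this
  have hx2 : x ^ 2 = (algebraMap R K) Q' := by
    rw [hxdef, div_pow, eq_comm, eq_div_iff (pow_ne_zero 2 h2d)]
    rw [← hkeyK, map_mul]
    push_cast [map_ofNat]
    ring
  have hint : IsIntegral R x := by
    refine ⟨Polynomial.X ^ 2 - Polynomial.C Q',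
      Polynomial.monic_X_pow_sub_C Q' two_ne_zero, ?_⟩
    simp [Polynomial.eval₂_sub, hx2]
  obtain ⟨S, hS⟩ := IsIntegrallyClosed.isIntegral_iff.mp hint
  exact ⟨S, hinj (by rw [map_pow, hS, hx2])⟩

/-- If `Q`, `Q'` are non-negative polynomials on `ℝⁿ`, `Q'` is not the square of a
polynomial, and `P + √Q = P' + √Q'` as functions on `ℝⁿ`, then `P = P'` and `Q = Q'`. -/
theorem sqrt_decomposition_unique (n : ℕ) (P P' Q Q' : MvPolynomial (Fin n) ℝ)
    (hQ : ∀ x : Fin n → ℝ, 0 ≤ eval x Q)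
    (hQ' : ∀ x : Fin n → ℝ, 0 ≤ eval x Q')
    (hQ'sq : ¬ ∃ S : MvPolynomial (Fin n) ℝ, Q' = S ^ 2)
    (h : ∀ x : Fin n → ℝ,
      eval x P + Real.sqrt (eval x Q) = eval x P' + Real.sqrt (eval x Q')) :
    P = P' ∧ Q = Q' := by
  set D := P - P' with hDdef
  set E := Q' + D ^ 2 - Q with hEdef
  -- pointwise identity: 2 D √Q' = E
  have hpt : ∀ x : Fin n → ℝ,
      2 * eval x D * Real.sqrt (eval x Q') = eval x E := by
    intro x
    have h1 : Real.sqrt (eval x Q) = Real.sqrt (eval x Q') - eval x D := by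
      have := h x
      simp only [hDdef, map_sub]
      linarith
    have hq : eval x Q = (Real.sqrt (eval x Q' ) - eval x D) ^ 2 := by
      rw [← h1, Real.sq_sqrt (hQ x)]
    have hs' : Real.sqrt (eval x Q') ^ 2 = eval x Q' := Real.sq_sqrt (hQ' x)
    simp only [hEdef, map_sub, map_add, map_pow]
    nlinarith [hq, hs']
  -- polynomial identity: 4 D² Q' = E²
  have key : 4 * D ^ 2 * Q' = E ^ 2 := by
    apply MvPolynomial.funext
    intro x
    have h1 := hpt x
    have hs' : Real.sqrt (eval x Q') ^ 2 = eval x Q' := Real.sq_sqrt (hQ' x)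
    simp only [map_mul, map_pow, map_ofNat]
    rw [← h1, mul_pow, hs']
    ring
  by_cases hD0 : D = 0
  · have hPP : P = P' := sub_eq_zero.mp (hDdef ▸ hD0)
    refine ⟨hPP, ?_⟩
    apply MvPolynomial.funext
    intro x
    have h1 : Real.sqrt (eval x Q) = Real.sqrt (eval x Q') := by
      have := h x
      rw [hPP] at this
      linarith
    calc eval x Q = Real.sqrt (eval x Q) ^ 2 := (Real.sq_sqrt (hQ x)).symm
      _ = Real.sqrt (eval x Q') ^ 2 := by rw [h1]
      _ = eval x Q' := Real.sq_sqrt (hQ' x)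
  · exact absurd (aux_sq_of_four_sq D E Q' hD0 key) hQ'sq
end

section
/- Let n ≥ 2, let m be a positive integer, and let f be a positive function on ℝⁿ \ {0}. There do not exist homogeneous polynomials P and S on ℝⁿ, with P of degree m, such that f(x)^m = P(x) + |S(x)| for all x ≠ 0. (In particular, in the decomposition f^m = P_m + √(Q_m) with Q_m a positive polynomial of degree 2m, the polynomial Q_m cannot be a square of a polynomial.) -/
open MvPolynomial

lemma eval_smul_of_isHomogeneous {n m : ℕ} (φ : MvPolynomial (Fin n) ℝ)
    (hφ : φ.IsHomogeneous m) (r : ℝ) (x : Fin n → ℝ) :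
    eval (r • x) φ = r ^ m * eval x φ := by
  rw [eval_eq', eval_eq', Finset.mul_sum]
  apply Finset.sum_congr rfl
  intro d hd
  have hdeg : ∑ i, d i = m := by
    have := hφ (mem_support_iff.mp hd)
    rw [← this]
    simp [Finsupp.weight_apply, Finsupp.sum_fintype]
  rw [← hdeg]
  simp only [Pi.smul_apply, smul_eq_mul, mul_pow]
  rw [Finset.prod_mul_distrib, Finset.prod_pow_eq_pow_sum]
  ring

lemma aux_growth {c s : ℝ} (hc : 0 < c) {k : ℕ} (hk : 1 ≤ k)
    (h : ∀ t : ℝ, 1 ≤ t → t ^ k * c < s) : False := by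
  have hs : c < s := by simpa using h 1 le_rfl
  have ht : (1:ℝ) ≤ s / c := le_of_lt ((one_lt_div hc).mpr hs)
  have h2 := h (s / c) ht
  have h3 : (s / c) ^ 1 ≤ (s / c) ^ k := pow_le_pow_right₀ ht hk
  have h4 : (s / c) * c ≤ (s / c) ^ k * c := by
    simpa using mul_le_mul_of_nonneg_right h3 hc.le
  rw [div_mul_cancel₀ _ hc.ne'] at h4
  linarith

/-- Let `n ≥ 2`, let `m` be a positive (odd) integer, and `f` a positive function on
`ℝⁿ \ {0}`. There are no homogeneous polynomials `P` and `S`, with `P` (nonzero) of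
degree `m`, such that `f(x)^m = P(x) + |S(x)|` for all `x ≠ 0`. (The key point, from the
paper, is that `P - S` is a homogeneous polynomial of odd degree and hence has a
nontrivial zero.) -/
theorem no_abs_poly_decomposition (n m : ℕ) (hn : 2 ≤ n) (hm : 0 < m) (hmodd : Odd m)
    (f : (Fin n → ℝ) → ℝ)
    (hpos : ∀ x : Fin n → ℝ, x ≠ 0 → 0 < f x) :
    ¬ ∃ (P S : MvPolynomial (Fin n) ℝ) (d : ℕ),
        P.IsHomogeneous m ∧ P ≠ 0 ∧ S.IsHomogeneous d ∧
        ∀ x : Fin n → ℝ, x ≠ 0 → f x ^ m = eval x P + |eval x S| := by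
  rintro ⟨P, S, d, hP, hPne, hS, heq⟩
  have hpos2 : ∀ x : Fin n → ℝ, x ≠ 0 → 0 < eval x P + |eval x S| := fun x hx => by
    rw [← heq x hx]; exact pow_pos (hpos x hx) m
  -- evaluation at -x
  have hPneg : ∀ x : Fin n → ℝ, eval (-x) P = - eval x P := by
    intro x
    have h := eval_smul_of_isHomogeneous P hP (-1) x
    rw [neg_one_smul] at h
    rw [h, hmodd.neg_one_pow]; ring
  have hSneg : ∀ x : Fin n → ℝ, |eval (-x) S| = |eval x S| := by
    intro x
    have h := eval_smul_of_isHomogeneous S hS (-1) x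
    rw [neg_one_smul] at h
    rw [h, abs_mul, abs_pow, abs_neg, abs_one, one_pow, one_mul]
  -- the key inequality
  have key : ∀ x : Fin n → ℝ, x ≠ 0 → |eval x P| < |eval x S| := by
    intro x hx
    have h1 := hpos2 x hx
    have h2 := hpos2 (-x) (neg_ne_zero.mpr hx)
    rw [hPneg, hSneg] at h2
    rw [abs_lt]; constructor <;> [linarith [abs_nonneg (eval x S), neg_abs_le (eval x S)]; skip]
    cases abs_cases (eval x S) with
    | inl h => linarith [h.1]
    | inr h => linarith [h.1]
  -- a point where P does not vanish
  obtain ⟨z, hz⟩ : ∃ z : Fin n → ℝ, eval z P ≠ 0 := by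
    by_contra hcon
    push_neg at hcon
    exact hPne (MvPolynomial.funext fun x => by simp [hcon x])
  have heval0 : ∀ (φ : MvPolynomial (Fin n) ℝ) (k : ℕ), φ.IsHomogeneous k → 0 < k →
      eval (0 : Fin n → ℝ) φ = 0 := by
    intro φ k hφ hk
    have h := eval_smul_of_isHomogeneous φ hφ 0 z
    rw [zero_smul, zero_pow hk.ne', zero_mul] at h
    exact h
  have hzne : z ≠ 0 := fun h => hz (h ▸ heval0 P m hP hm)
  -- scaling inequality
  have hscale : ∀ t : ℝ, 1 ≤ t → t ^ m * |eval z P| < t ^ d * |eval z S| := by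
    intro t ht
    have ht0 : (0:ℝ) < t := lt_of_lt_of_le zero_lt_one ht
    have h := key (t • z) (smul_ne_zero ht0.ne' hzne)
    rw [eval_smul_of_isHomogeneous P hP, eval_smul_of_isHomogeneous S hS,
      abs_mul, abs_mul, abs_pow, abs_pow, abs_of_pos ht0] at h
    exact h
  -- d = m
  have hdm : d = m := by
    rcases lt_trichotomy m d with h | h | h
    · -- m < d : use t = 1/t trick via small t... instead use inverse substitution
      exfalso
      apply aux_growth (abs_pos.mpr hz) (k := d - m) (by omega)
      intro t ht
      have ht0 : (0:ℝ) < t := lt_of_lt_of_le zero_lt_one ht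
      have h2 := key (t⁻¹ • z) (smul_ne_zero (inv_ne_zero ht0.ne') hzne)
      rw [eval_smul_of_isHomogeneous P hP, eval_smul_of_isHomogeneous S hS,
        abs_mul, abs_mul, abs_pow, abs_pow, abs_of_pos (inv_pos.mpr ht0)] at h2
      have hmul := mul_lt_mul_of_pos_left h2 (pow_pos ht0 d)
      have e1 : t ^ d * t⁻¹ ^ m = t ^ (d - m) := by
        rw [pow_sub₀ t ht0.ne' h.le, inv_pow]
      have e2 : t ^ d * t⁻¹ ^ d = 1 := by
        rw [inv_pow, mul_inv_cancel₀ (pow_ne_zero d ht0.ne')]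
      rw [← mul_assoc, ← mul_assoc, e1, e2, one_mul] at hmul
      exact hmul
    · exact h.symm
    · exfalso
      apply aux_growth (abs_pos.mpr hz) (k := m - d) (by omega)
      intro t ht
      have ht0 : (0:ℝ) < t := lt_of_lt_of_le zero_lt_one ht
      have h2 := hscale t ht
      have e1 : t ^ m = t ^ d * t ^ (m - d) := by
        rw [← pow_add]; congr 1; omega
      rw [e1, mul_assoc] at h2
      exact lt_of_mul_lt_mul_left h2 (pow_pos ht0 d).le
  subst hdm
  -- P - S is homogeneous of odd degree d = m, get a nontrivial zero
  have hgh : (P - S).IsHomogeneous d := hP.sub hS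
  have hgne : P - S ≠ 0 := by
    intro h
    have : P = S := sub_eq_zero.mp h
    exact absurd (key z hzne) (by rw [this]; exact lt_irrefl _)
  obtain ⟨w, hw⟩ : ∃ w : Fin n → ℝ, eval w (P - S) ≠ 0 := by
    by_contra hcon
    push_neg at hcon
    exact hgne (MvPolynomial.funext fun x => by simp [hcon x])
  have hwne : w ≠ 0 := fun h => hw (h ▸ heval0 (P - S) d hgh hm)
  -- choose orientation
  have hflip : eval (-w) (P - S) = - eval w (P - S) := by
    have h := eval_smul_of_isHomogeneous (P - S) hgh (-1) w
    rw [neg_one_smul] at h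
    rw [h, hmodd.neg_one_pow]; ring
  set a : Fin n → ℝ := if eval w (P - S) ≤ 0 then w else -w with ha
  have hane : a ≠ 0 := by
    rw [ha]; split_ifs
    · exact hwne
    · exact neg_ne_zero.mpr hwne
  have haval : eval a (P - S) ≤ 0 ∧ 0 ≤ eval (-a) (P - S) := by
    rw [ha]; split_ifs with h'
    · constructor
      · exact h'
      · rw [hflip]; linarith
    · push_neg at h'
      constructor
      · rw [hflip]; linarith
      · rw [neg_neg]; linarith
  -- connectedness of the complement of 0
  have hrank : 1 < Module.rank ℝ (Fin n → ℝ) := by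
    rw [rank_fun']
    simp only [Fintype.card_fin]
    exact_mod_cast (by omega : 1 < n)
  have hconn := (isConnected_compl_singleton_of_one_lt_rank hrank (0 : Fin n → ℝ)).isPreconnected
  have hmem : ∀ y : Fin n → ℝ, y ≠ 0 → y ∈ ({0}ᶜ : Set (Fin n → ℝ)) := fun y hy => hy
  have hivt := hconn.intermediate_value (hmem a hane) (hmem (-a) (neg_ne_zero.mpr hane))
    ((MvPolynomial.continuous_eval (P - S)).continuousOn)
  have h0 : (0:ℝ) ∈ Set.Icc (eval a (P - S)) (eval (-a) (P - S)) := ⟨haval.1, haval.2⟩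
  obtain ⟨x, hxmem, hx0⟩ := hivt h0
  have hxne : x ≠ 0 := hxmem
  have : eval x P = eval x S := by
    have h5 : eval x P - eval x S = 0 := by simpa [map_sub] using hx0
    linarith
  exact absurd (key x hxne) (by rw [this]; exact lt_irrefl _)
end

section
/- Let K be a convex body in ℝⁿ containing the origin in its interior, and suppose there exist a homogeneous polynomial P of degree 1 and a homogeneous polynomial Q of degree 2 such that ‖x‖_K − ‖−x‖_K = P(x) and ‖x‖_K² + ‖−x‖_K² = Q(x) for all x ∈ ℝⁿ. Then ‖x‖_K = (1/2)(P(x) + √(2Q(x) − P(x)²)) for all x, and K is an ellipsoid. -/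
/-!
Write `a = ‖x‖_K` and `b = ‖-x‖_K`. Since `2(a² + b²) - (a - b)² = (a + b)²` and `a, b ≥ 0`, the
two identities determine `a` as stated. Moreover `ab = (Q - P²)/2` is a quadratic form, positive
definite because the gauge of a bounded body vanishes only at `0`; hence `ab = ‖Ax‖²` for a linear
isomorphism `A`. As `a ≤ 1 ↔ (a - 1)(b + 1) ≤ 0 ↔ ab + P ≤ 1`, the body `K` is the sublevel set
`{‖Ax‖² + P(x) ≤ 1}`, which after completing the square is a ball in the coordinates `Ax`.
-/

open MvPolynomial

/-- `K ⊆ ℝⁿ` is an ellipsoid: the image of the closed Euclidean unit ball under an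
invertible affine transformation. -/
def IsEllipsoid {n : ℕ} (K : Set (EuclideanSpace ℝ (Fin n))) : Prop :=
  ∃ T : EuclideanSpace ℝ (Fin n) ≃ᵃ[ℝ] EuclideanSpace ℝ (Fin n),
    K = T '' Metric.closedBall 0 1

open scoped Pointwise RealInnerProductSpace Topology

namespace MvPolynomial.IsHomogeneous

variable {σ R : Type*} [CommRing R] {φ : MvPolynomial σ R}

theorem exists_linearMap_eval_eq (hφ : φ.IsHomogeneous 1) :
    ∃ l : (σ → R) →ₗ[R] R, ∀ v, eval v φ = l v := by
  have hmem : φ ∈ Submodule.span R (Set.range (X : σ → MvPolynomial σ R)) := by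
    rw [← homogeneousSubmodule_one_eq_span_X]; exact hφ
  clear hφ
  induction hmem using Submodule.span_induction with
  | mem _ h =>
    obtain ⟨i, rfl⟩ := h
    exact ⟨LinearMap.proj i, fun v => eval_X ..⟩
  | zero => exact ⟨0, fun v => map_zero _⟩
  | add _ _ _ _ h₁ h₂ =>
    obtain ⟨l₁, h₁⟩ := h₁; obtain ⟨l₂, h₂⟩ := h₂
    exact ⟨l₁ + l₂, fun v => by simp [h₁, h₂]⟩
  | smul c _ _ h =>
    obtain ⟨l, h⟩ := h
    exact ⟨c • l, fun v => by simp [h]⟩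

theorem exists_quadraticMap_eval_eq_s10 (hφ : φ.IsHomogeneous 2) :
    ∃ Q : QuadraticMap R (σ → R) R, ∀ v, eval v φ = Q v := by
  have hmem : φ ∈ Submodule.span R (Set.range (X : σ → MvPolynomial σ R) ^ 2) := by
    rw [← Submodule.span_pow, ← homogeneousSubmodule_one_eq_span_X, homogeneousSubmodule_one_pow]
    exact hφ
  clear hφ
  induction hmem using Submodule.span_induction with
  | mem _ h =>
    obtain ⟨_, ⟨i, rfl⟩, _, ⟨j, rfl⟩, rfl⟩ := Set.mem_mul.mp (by rwa [pow_two] at h)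
    exact ⟨QuadraticMap.linMulLin (LinearMap.proj i) (LinearMap.proj j), fun v => by simp⟩
  | zero => exact ⟨0, fun v => map_zero _⟩
  | add _ _ _ _ h₁ h₂ =>
    obtain ⟨Q₁, h₁⟩ := h₁; obtain ⟨Q₂, h₂⟩ := h₂
    exact ⟨Q₁ + Q₂, fun v => by simp [h₁, h₂]⟩
  | smul c _ _ h =>
    obtain ⟨Q, h⟩ := h
    exact ⟨c • Q, fun v => by simp [h]⟩

end MvPolynomial.IsHomogeneous

/-- Diagonalise `Q` by an orthonormal basis for the inner product `QuadraticMap.associated Q`. -/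
theorem QuadraticMap.PosDef.exists_linearEquiv_norm_sq_eq {E : Type*} [AddCommGroup E]
    [Module ℝ E] [FiniteDimensional ℝ E] {Q : QuadraticForm ℝ E} (hQ : Q.PosDef) {n : ℕ}
    (hn : Module.finrank ℝ E = n) :
    ∃ A : E ≃ₗ[ℝ] EuclideanSpace ℝ (Fin n), ∀ x, Q x = ‖A x‖ ^ 2 := by
  have hdiag (x : E) : QuadraticMap.associated Q x x = Q x :=
    QuadraticMap.associated_eq_self_apply ℝ Q x
  let core : InnerProductSpace.Core ℝ E :=
    { inner x y := QuadraticMap.associated Q x y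
      conj_inner_symm x y := QuadraticMap.associated_isSymm ℝ Q y x
      re_inner_nonneg x := (hdiag x).symm ▸ hQ.nonneg x
      add_left x y z := by simp
      smul_left x y r := by simp
      definite x hx := hQ.anisotropic x ((hdiag x).symm.trans hx) }
  let _ := core.toNormedAddCommGroup
  let _ := InnerProductSpace.ofCore core.toCore
  let A := ((stdOrthonormalBasis ℝ E).reindex (finCongr hn)).repr
  refine ⟨A.toLinearEquiv, fun x => ?_⟩
  rw [LinearIsometryEquiv.coe_toLinearEquiv, A.norm_map, ← real_inner_self_eq_norm_sq]
  exact (hdiag x).symm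

section Ellipsoid

variable {n : ℕ}

local notation "E" => EuclideanSpace ℝ (Fin n)

theorem IsEllipsoid.image {K : Set E} (hK : IsEllipsoid K) (S : E ≃ᵃ[ℝ] E) :
    IsEllipsoid (S '' K) := by
  obtain ⟨T, rfl⟩ := hK
  exact ⟨T.trans S, by rw [Set.image_image]; rfl⟩

theorem isEllipsoid_closedBall (z : E) {r : ℝ} (hr : 0 < r) :
    IsEllipsoid (Metric.closedBall z r) :=
  ⟨(LinearEquiv.smulOfNeZero ℝ E r hr.ne').toAffineEquiv.trans (AffineEquiv.constVAdd ℝ E z),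
    (affinity_unitClosedBall hr.le z).symm.trans (Set.image_comp _ _ _).symm⟩

theorem isEllipsoid_setOf_norm_sq_add_le (A : E ≃ₗ[ℝ] E) (ℓ : E →ₗ[ℝ] ℝ) {c : ℝ}
    (hc : 0 < c) : IsEllipsoid {x | ‖A x‖ ^ 2 + ℓ x ≤ c} := by
  set w : E := (InnerProductSpace.toDual ℝ E).symm
    (LinearMap.toContinuousLinearMap (ℓ ∘ₗ A.symm.toLinearMap))
  have hℓ (x : E) : ℓ x = ⟪w, A x⟫ := by
    simp [w, InnerProductSpace.toDual_symm_apply]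
  have hsq (x : E) : ‖A x + (1 / 2 : ℝ) • w‖ ^ 2 = ‖A x‖ ^ 2 + ℓ x + ‖w‖ ^ 2 / 4 := by
    rw [norm_add_sq_real, real_inner_smul_right, norm_smul, real_inner_comm, hℓ,
      Real.norm_of_nonneg (by norm_num)]
    ring
  have hset : {x | ‖A x‖ ^ 2 + ℓ x ≤ c} =
      A.symm.toAffineEquiv '' Metric.closedBall (-((1 / 2 : ℝ) • w)) √(c + ‖w‖ ^ 2 / 4) := by
    ext x
    rw [LinearEquiv.coe_toAffineEquiv, LinearEquiv.image_symm_eq_preimage, Set.mem_preimage,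
      Metric.mem_closedBall, dist_eq_norm, sub_neg_eq_add, Real.le_sqrt (norm_nonneg _)
      (by positivity), hsq, Set.mem_ofPred_eq, add_le_add_iff_right]
  rw [hset]
  exact (isEllipsoid_closedBall _ (by positivity)).image _

end Ellipsoid

theorem eq_half_mul_add_sqrt {a b : ℝ} (ha : 0 ≤ a) (hb : 0 ≤ b) :
    a = 1 / 2 * (a - b + √(2 * (a ^ 2 + b ^ 2) - (a - b) ^ 2)) := by
  rw [show 2 * (a ^ 2 + b ^ 2) - (a - b) ^ 2 = (a + b) ^ 2 by ring,
    Real.sqrt_sq (add_nonneg ha hb)]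
  ring

theorem le_one_iff_mul_add_sub_le_one {a b : ℝ} (hb : 0 ≤ b) : a ≤ 1 ↔ a * b + (a - b) ≤ 1 := by
  have hb1 : 0 < b + 1 := by linarith
  constructor
  · intro h
    nlinarith [mul_nonneg (sub_nonneg.2 h) hb1.le]
  · intro h
    by_contra! ha
    nlinarith [mul_pos (sub_pos.2 ha) hb1]

theorem isEllipsoid_of_gauge_sub_linear_of_gauge_mul_quadratic {n : ℕ}
    {K : Set (EuclideanSpace ℝ (Fin n))}
    (hcomp : IsCompact K) (hconv : Convex ℝ K) (hK0 : K ∈ 𝓝 0)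
    (p : EuclideanSpace ℝ (Fin n) →ₗ[ℝ] ℝ) (C : QuadraticForm ℝ (EuclideanSpace ℝ (Fin n)))
    (hp : ∀ x, gauge K x - gauge K (-x) = p x) (hC : ∀ x, gauge K x * gauge K (-x) = C x) :
    IsEllipsoid K := by
  have hgauge_pos {x} : 0 < gauge K x ↔ x ≠ 0 :=
    gauge_pos (absorbent_nhds_zero hK0) ((NormedSpace.isVonNBounded_iff ℝ).2 hcomp.isBounded)
  have hCpos : C.PosDef := fun x hx => by
    rw [← hC]; exact mul_pos (hgauge_pos.2 hx) (hgauge_pos.2 (neg_ne_zero.2 hx))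
  obtain ⟨A, hA⟩ := hCpos.exists_linearEquiv_norm_sq_eq finrank_euclideanSpace_fin
  have hK : K = {x | ‖A x‖ ^ 2 + p x ≤ 1} := by
    ext x
    rw [Set.mem_ofPred_eq, ← hA, ← hC, ← hp,
      ← le_one_iff_mul_add_sub_le_one (gauge_nonneg (s := K) (-x)),
      gauge_le_one_iff_mem_closure hconv hK0, hcomp.isClosed.closure_eq]
  exact hK ▸ isEllipsoid_setOf_norm_sq_add_le A p one_pos

/-- If `K` is a convex body containing the origin in its interior and there are homogeneous
polynomials `P` of degree 1 and `Q` of degree 2 with `‖x‖_K - ‖-x‖_K = P(x)` and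
`‖x‖_K² + ‖-x‖_K² = Q(x)`, then `‖x‖_K = (1/2)(P(x) + √(2Q(x) - P(x)²))` and `K`
is an ellipsoid. -/
theorem convex_body_from_two_polynomial_identities (n : ℕ)
    (K : Set (EuclideanSpace ℝ (Fin n)))
    (hcomp : IsCompact K) (hconv : Convex ℝ K)
    (h0 : (0 : EuclideanSpace ℝ (Fin n)) ∈ interior K)
    (P Q : MvPolynomial (Fin n) ℝ)
    (hP : P.IsHomogeneous 1) (hQ : Q.IsHomogeneous 2)
    (h1 : ∀ x : EuclideanSpace ℝ (Fin n),
      gauge K x - gauge K (-x) = eval (fun i => x i) P)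
    (h2 : ∀ x : EuclideanSpace ℝ (Fin n),
      gauge K x ^ 2 + gauge K (-x) ^ 2 = eval (fun i => x i) Q) :
    (∀ x : EuclideanSpace ℝ (Fin n),
      gauge K x = (1 / 2) * (eval (fun i => x i) P +
        Real.sqrt (2 * eval (fun i => x i) Q - (eval (fun i => x i) P) ^ 2))) ∧
    IsEllipsoid K := by
  refine ⟨fun x => ?_, ?_⟩
  · rw [← h1 x, ← h2 x]
    exact eq_half_mul_add_sqrt (gauge_nonneg x) (gauge_nonneg (-x))
  obtain ⟨ℓ, hℓ⟩ := hP.exists_linearMap_eval_eq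
  obtain ⟨q, hq⟩ := hQ.exists_quadraticMap_eval_eq_s10
  let e := (WithLp.linearEquiv 2 ℝ (Fin n → ℝ)).toLinearMap
  let p := ℓ ∘ₗ e
  have hp (x) : gauge K x - gauge K (-x) = p x := (h1 x).trans (hℓ _)
  have hq' (x) : gauge K x ^ 2 + gauge K (-x) ^ 2 = q (e x) := (h2 x).trans (hq _)
  refine isEllipsoid_of_gauge_sub_linear_of_gauge_mul_quadratic hcomp hconv
    (mem_interior_iff_mem_nhds.1 h0) p ((1 / 2 : ℝ) • (q.comp e - QuadraticMap.linMulLin p p)) hp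
    fun x => ?_
  simp only [smul_apply, sub_apply, QuadraticMap.comp_apply, QuadraticMap.linMulLin_apply,
    ← hp, ← hq', smul_eq_mul]
  ring
end

section
/- Let K be a convex body in ℝⁿ containing the origin in its interior. Suppose there is a positive integer k₀ such that for every integer k ≥ k₀, the functions x ↦ ‖x‖_K^{2k} + ‖−x‖_K^{2k} and x ↦ ‖x‖_K^{2k+1} − ‖−x‖_K^{2k+1} are homogeneous polynomial functions on ℝⁿ (of degrees 2k and 2k+1 respectively). Then there is a quadratic polynomial B, positive on ℝⁿ \ {0}, such that ‖x‖_K · ‖−x‖_K = B(x) for all x ∈ ℝⁿ; equivalently, the origin-symmetric star body L defined by ‖x‖_L = √(‖x‖_K ‖−x‖_K) is an ellipsoid centered at the origin. -/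
/-!
Write `a = ‖x‖_K`, `b = ‖-x‖_K`, `h = ab` and `k = k₀`. The identities
`(a^{2k} + b^{2k})^2 - (a^{4k} + b^{4k}) = 2 h^{2k}` and
`(a^{4k+2} + b^{4k+2}) - (a^{2k+1} - b^{2k+1})^2 = 2 h^{2k+1}`
show that `h^{2k}` and `h^{2k+1}` are polynomial functions `P` and `Q`. Then `Q^{2k} = P^{2k+1}` in
the polynomial ring, which is a UFD and hence integrally closed, so `P = S^{2k}` and `Q = S^{2k+1}`
for a polynomial `S`, whose values are those of `h`. Since `h` is positively homogeneous of degree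
two, it agrees with the degree-two component of `S`; it is positive away from the origin because
`K` is bounded.
-/

open MvPolynomial

theorem IsIntegrallyClosed.exists_eq_pow_of_pow_eq_pow_of_coprime {R : Type*} [CommRing R]
    [IsDomain R] [IsIntegrallyClosed R] {a b : R} {m n : ℕ} (hmn : m.Coprime n)
    (h : a ^ m = b ^ n) : ∃ c : R, a = c ^ n ∧ b = c ^ m := by
  let φ := algebraMap R (FractionRing R)
  have hφ : Function.Injective φ := IsFractionRing.injective R (FractionRing R)
  have hφab : φ a ^ m = φ b ^ n := by rw [← map_pow, ← map_pow, h]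
  obtain ⟨c, ha, hb⟩ := (pow_eq_pow_iff_of_coprime hmn).mp hφab
  have hc : IsIntegral R c := by
    rcases n.eq_zero_or_pos with rfl | hn
    · rw [(Nat.coprime_zero_right m).mp hmn, pow_one] at hb
      exact hb ▸ isIntegral_algebraMap
    · exact IsIntegral.of_pow hn (ha ▸ isIntegral_algebraMap)
  obtain ⟨c, rfl⟩ := IsIntegrallyClosed.isIntegral_iff.mp hc
  exact ⟨c, hφ (by rw [ha, map_pow]), hφ (by rw [hb, map_pow])⟩

theorem eq_of_pow_eq_of_pow_succ_eq {M₀ : Type*} [MonoidWithZero M₀] [NoZeroDivisors M₀]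
    [IsLeftCancelMulZero M₀] {a b : M₀} {m : ℕ} (h : a ^ m = b ^ m) (hsucc : a ^ (m + 1) = b ^ (m + 1)) : a = b := by
  rcases eq_or_ne b 0 with rfl | hb
  · simpa using hsucc
  · rw [pow_succ, pow_succ, h] at hsucc
    exact mul_left_cancel₀ (pow_ne_zero m hb) hsucc

namespace MvPolynomial

variable {σ R : Type*}

theorem IsHomogeneous.eval_smul [CommSemiring R] {p : MvPolynomial σ R} {d : ℕ}
    (hp : p.IsHomogeneous d) (t : R) (x : σ → R) :
    eval (t • x) p = t ^ d * eval x p := by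
  rw [eval_eq, eval_eq, Finset.mul_sum]
  refine Finset.sum_congr rfl fun c hc => ?_
  have hdeg : ∑ i ∈ c.support, c i = d := by
    by_contra hne
    exact mem_support_iff.mp hc (hp.coeff_eq_zero (by simpa [Finsupp.degree_apply] using hne))
  simp only [Pi.smul_apply, smul_eq_mul, mul_pow, Finset.prod_mul_distrib,
    Finset.prod_pow_eq_pow_sum, hdeg]
  ring

theorem exists_eval_eq_of_eval_eq_pow [Field R] [Infinite R] [Finite σ] {f : (σ → R) → R}
    {m : ℕ} {P Q : MvPolynomial σ R} (hP : ∀ x, eval x P = f x ^ m)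
    (hQ : ∀ x, eval x Q = f x ^ (m + 1)) : ∃ S : MvPolynomial σ R, ∀ x, eval x S = f x := by
  have hQP : Q ^ m = P ^ (m + 1) := funext fun x => by
    rw [map_pow, map_pow, hP, hQ, ← pow_mul, ← pow_mul, mul_comm]
  obtain ⟨S, hPS, hQS⟩ := IsIntegrallyClosed.exists_eq_pow_of_pow_eq_pow_of_coprime
    (Nat.coprime_self_add_right.mpr (Nat.coprime_one_right m)) hQP
  refine ⟨S, fun x => eq_of_pow_eq_of_pow_succ_eq (m := m) ?_ ?_⟩
  · rw [← map_pow, ← hQS, hP]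
  · rw [← map_pow, ← hPS, hQ]

theorem eval_homogeneousComponent_of_eval_smul [Field R] [LinearOrder R] [IsStrictOrderedRing R]
    {S : MvPolynomial σ R} {d : ℕ} {x : σ → R}
    (h : ∀ t : R, 0 ≤ t → eval (t • x) S = t ^ d * eval x S) :
    eval x (homogeneousComponent d S) = eval x S := by
  set N := S.totalDegree + d + 1
  have hsum : ∑ i ∈ Finset.range N, homogeneousComponent i S = S := by
    rw [← Finset.sum_range_add_sum_Ico _ (by omega : S.totalDegree + 1 ≤ N),
      sum_homogeneousComponent, add_eq_left]
    exact Finset.sum_eq_zero fun i hi =>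
      homogeneousComponent_eq_zero i S (by rw [Finset.mem_Ico] at hi; omega)
  let F : Polynomial R := ∑ i ∈ Finset.range N,
    Polynomial.C (eval x (homogeneousComponent i S)) * Polynomial.X ^ i
  have hF : F = Polynomial.C (eval x S) * Polynomial.X ^ d := by
    refine Polynomial.eq_of_infinite_eval_eq _ _ ((Set.Ici_infinite 0).mono fun t ht => ?_)
    simp only [Set.mem_ofPred_eq, F, Polynomial.eval_finsetSum, Polynomial.eval_mul,
      Polynomial.eval_C, Polynomial.eval_pow, Polynomial.eval_X]
    calc ∑ i ∈ Finset.range N, eval x (homogeneousComponent i S) * t ^ i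
        = ∑ i ∈ Finset.range N, eval (t • x) (homogeneousComponent i S) :=
          Finset.sum_congr rfl fun i _ => by
            rw [(homogeneousComponent_isHomogeneous i S).eval_smul, mul_comm]
      _ = eval x S * t ^ d := by rw [← map_sum, hsum, h t ht, mul_comm]
  have := congrArg (Polynomial.coeff · d) hF
  simpa [F, Polynomial.finsetSum_coeff, Polynomial.coeff_C_mul, Polynomial.coeff_X_pow,
    show d < N by omega] using this

end MvPolynomial

theorem gauge_mul_gauge_neg_pos {E : Type*} [NormedAddCommGroup E] [NormedSpace ℝ E]
    {K : Set E} (h0 : (0 : E) ∈ interior K) (hK : Bornology.IsBounded K) {x : E} (hx : x ≠ 0) :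
    0 < gauge K x * gauge K (-x) := by
  have hKa : Absorbent ℝ K := absorbent_nhds_zero (mem_interior_iff_mem_nhds.mp h0)
  have hKb : Bornology.IsVonNBounded ℝ K := (NormedSpace.isVonNBounded_iff ℝ).mpr hK
  exact mul_pos ((gauge_pos hKa hKb).mpr hx) ((gauge_pos hKa hKb).mpr (neg_ne_zero.mpr hx))

theorem gauge_mul_gauge_neg_smul {E : Type*} [AddCommGroup E] [Module ℝ E] (K : Set E)
    {t : ℝ} (ht : 0 ≤ t) (x : E) :
    gauge K (t • x) * gauge K (-(t • x)) = t ^ 2 * (gauge K x * gauge K (-x)) := by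
  rw [← smul_neg, gauge_smul_of_nonneg ht, gauge_smul_of_nonneg ht, smul_eq_mul, smul_eq_mul]
  ring

theorem product_of_gauges_is_quadratic_general (n : ℕ)
    (K : Set (EuclideanSpace ℝ (Fin n)))
    (hcomp : IsCompact K)
    (h0 : (0 : EuclideanSpace ℝ (Fin n)) ∈ interior K)
    (k₀ : ℕ)
    (heven : ∀ k : ℕ, k₀ ≤ k → ∃ p : MvPolynomial (Fin n) ℝ,
      p.IsHomogeneous (2 * k) ∧
      ∀ x : EuclideanSpace ℝ (Fin n),
        gauge K x ^ (2 * k) + gauge K (-x) ^ (2 * k) = eval (fun i => x i) p)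
    (hodd : ∀ k : ℕ, k₀ ≤ k → ∃ q : MvPolynomial (Fin n) ℝ,
      q.IsHomogeneous (2 * k + 1) ∧
      ∀ x : EuclideanSpace ℝ (Fin n),
        gauge K x ^ (2 * k + 1) - gauge K (-x) ^ (2 * k + 1) = eval (fun i => x i) q) :
    ∃ B : MvPolynomial (Fin n) ℝ, B.IsHomogeneous 2 ∧
      (∀ x : EuclideanSpace ℝ (Fin n), x ≠ 0 → 0 < eval (fun i => x i) B) ∧
      ∀ x : EuclideanSpace ℝ (Fin n),
        gauge K x * gauge K (-x) = eval (fun i => x i) B := by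
  let f : (Fin n → ℝ) → ℝ := fun y => gauge K (WithLp.toLp 2 y) * gauge K (-WithLp.toLp 2 y)
  obtain ⟨p₁, -, hp₁⟩ := heven k₀ le_rfl
  obtain ⟨p₂, -, hp₂⟩ := heven (2 * k₀) (by omega)
  obtain ⟨p₃, -, hp₃⟩ := heven (2 * k₀ + 1) (by omega)
  obtain ⟨q, -, hq⟩ := hodd k₀ le_rfl
  obtain ⟨S, hS⟩ := exists_eval_eq_of_eval_eq_pow (f := f) (m := 2 * k₀)
    (P := C 2⁻¹ * (p₁ ^ 2 - p₂)) (Q := C 2⁻¹ * (p₃ - q ^ 2))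
    (fun y => by
      simp only [map_mul, map_sub, map_pow, eval_C]
      rw [← hp₁ (WithLp.toLp 2 y), ← hp₂ (WithLp.toLp 2 y)]
      ring)
    (fun y => by
      simp only [map_mul, map_sub, map_pow, eval_C]
      rw [← hp₃ (WithLp.toLp 2 y), ← hq (WithLp.toLp 2 y)]
      ring)
  have hB (x : EuclideanSpace ℝ (Fin n)) :
      eval (fun i => x i) (homogeneousComponent 2 S) = gauge K x * gauge K (-x) := by
    rw [eval_homogeneousComponent_of_eval_smul fun t ht => ?_]
    · exact hS _
    · rw [hS, hS]
      exact gauge_mul_gauge_neg_smul K ht _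
  exact ⟨homogeneousComponent 2 S, homogeneousComponent_isHomogeneous 2 S,
    fun x hx => (hB x).symm ▸ gauge_mul_gauge_neg_pos h0 hcomp.isBounded hx,
    fun x => (hB x).symm⟩

/-- Let `K` be a convex body in `ℝⁿ` with `0` in its interior such that for every `k ≥ k₀`
the functions `‖x‖_K^{2k} + ‖-x‖_K^{2k}` and `‖x‖_K^{2k+1} - ‖-x‖_K^{2k+1}` are homogeneous
polynomials of the corresponding degrees. Then there is a homogeneous quadratic polynomial
`B`, positive away from the origin, with `‖x‖_K · ‖-x‖_K = B(x)` for all `x`. -/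
theorem product_of_gauges_is_quadratic (n : ℕ)
    (K : Set (EuclideanSpace ℝ (Fin n)))
    (hcomp : IsCompact K) (hconv : Convex ℝ K)
    (h0 : (0 : EuclideanSpace ℝ (Fin n)) ∈ interior K)
    (k₀ : ℕ) (hk₀ : 0 < k₀)
    (heven : ∀ k : ℕ, k₀ ≤ k → ∃ p : MvPolynomial (Fin n) ℝ,
      p.IsHomogeneous (2 * k) ∧
      ∀ x : EuclideanSpace ℝ (Fin n),
        gauge K x ^ (2 * k) + gauge K (-x) ^ (2 * k) = eval (fun i => x i) p)
    (hodd : ∀ k : ℕ, k₀ ≤ k → ∃ q : MvPolynomial (Fin n) ℝ,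
      q.IsHomogeneous (2 * k + 1) ∧
      ∀ x : EuclideanSpace ℝ (Fin n),
        gauge K x ^ (2 * k + 1) - gauge K (-x) ^ (2 * k + 1) = eval (fun i => x i) q) :
    ∃ B : MvPolynomial (Fin n) ℝ, B.IsHomogeneous 2 ∧
      (∀ x : EuclideanSpace ℝ (Fin n), x ≠ 0 → 0 < eval (fun i => x i) B) ∧
      ∀ x : EuclideanSpace ℝ (Fin n),
        gauge K x * gauge K (-x) = eval (fun i => x i) B :=
  product_of_gauges_is_quadratic_general n K hcomp h0 k₀ heven hodd
end

section
/- Let n ≥ 2 and let f be a positive function on ℝⁿ \ {0}, homogeneous of degree 1. Suppose there exist a non-negative polynomial D on ℝⁿ that is not a square of a polynomial, and for every large odd integer m, polynomials P_m and S_m with f(x)^m = P_m(x) + S_m(x)√(D(x)) for all x ≠ 0. Then f itself lies in the field F(√D), i.e., f = P + S√D on ℝⁿ \ {0} for some rational functions P and S on ℝⁿ. -/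
open MvPolynomial

/-!
Let `u = P + S√D` and `v = P' + S'√D` represent `f ^ (2M+1)` and `f ^ (2M+3)`, viewed in the
quadratic algebra `R[√D]` over the polynomial ring `R`. Since `(2M+3)(M+1) - (2M+1)(M+2) = 1`,
`f = v ^ (M+1) / u ^ (M+2) = v ^ (M+1) ū ^ (M+2) / N(u) ^ (M+2)`. The norm `N(u) = P² - S²D`
is a nonzero polynomial: `u ≠ 0` because `f > 0`, and `P² = S²D` with `S ≠ 0` would make `D` a
square in the integrally closed ring `R`.
-/

namespace QuadraticAlgebra

variable {R S : Type*} [CommRing R] [CommRing S]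

def liftRingHom {a b : R} (φ : R →+* S) (s : S) (hs : s * s = φ a + φ b * s) :
    QuadraticAlgebra R a b →+* S :=
  letI := φ.toAlgebra
  (lift ⟨s, by simpa [Algebra.smul_def, RingHom.algebraMap_toAlgebra] using hs⟩ :
    QuadraticAlgebra R a b →ₐ[R] S).toRingHom

@[simp]
theorem liftRingHom_apply {a b : R} (φ : R →+* S) (s : S) (hs : s * s = φ a + φ b * s)
    (z : QuadraticAlgebra R a b) : liftRingHom φ s hs z = φ z.re + φ z.im * s := by
  let := φ.toAlgebra
  simp [liftRingHom, Algebra.smul_def, RingHom.algebraMap_toAlgebra]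

theorem norm_eq_zero_iff_of_not_isSquare [IsDomain R] [IsIntegrallyClosed R] {a : R}
    (ha : ¬ IsSquare a) {z : QuadraticAlgebra R a 0} : norm z = 0 ↔ z = 0 := by
  refine ⟨fun hz => ?_, fun hz => by simp [hz]⟩
  have hre : z.re ^ 2 = z.im ^ 2 * a := by
    rw [norm_def] at hz
    linear_combination hz
  by_cases him : z.im = 0
  · ext
    · simpa [him] using hre
    · exact him
  · obtain ⟨c, hc⟩ := (IsIntegrallyClosed.pow_dvd_pow_iff two_ne_zero).mp ⟨a, hre⟩
    refine absurd ⟨c, ?_⟩ ha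
    apply mul_left_cancel₀ (pow_ne_zero 2 him)
    linear_combination -hre + (z.re + z.im * c) * hc

end QuadraticAlgebra

theorem positive_homogeneous_lies_in_quadratic_extension_general (n : ℕ) (hn : 2 ≤ n)
    (f : (Fin n → ℝ) → ℝ)
    (hpos : ∀ x : Fin n → ℝ, x ≠ 0 → 0 < f x)
    (D : MvPolynomial (Fin n) ℝ)
    (hD0 : ∀ x : Fin n → ℝ, 0 ≤ eval x D)
    (hDsq : ¬ ∃ s : MvPolynomial (Fin n) ℝ, D = s ^ 2)
    (hM : ∃ M : ℕ, ∀ m : ℕ, M ≤ m → Odd m →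
      ∃ P S : MvPolynomial (Fin n) ℝ,
        ∀ x : Fin n → ℝ, x ≠ 0 →
          f x ^ m = eval x P + eval x S * Real.sqrt (eval x D)) :
    ∃ p q r : MvPolynomial (Fin n) ℝ, r ≠ 0 ∧
      ∀ x : Fin n → ℝ, x ≠ 0 → eval x r ≠ 0 →
        f x = eval x p / eval x r + (eval x q / eval x r) * Real.sqrt (eval x D) := by
  obtain ⟨M, hMall⟩ := hM
  obtain ⟨P, S, hu⟩ := hMall (2 * M + 1) (by omega) ⟨M, rfl⟩
  obtain ⟨P', S', hv⟩ := hMall (2 * M + 3) (by omega) ⟨M + 1, by ring⟩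
  let ψ (x : Fin n → ℝ) : QuadraticAlgebra (MvPolynomial (Fin n) ℝ) D 0 →+* ℝ :=
    QuadraticAlgebra.liftRingHom (eval x) √(eval x D) (by simp [Real.mul_self_sqrt (hD0 x)])
  let u : QuadraticAlgebra _ D 0 := ⟨P, S⟩
  let v : QuadraticAlgebra _ D 0 := ⟨P', S'⟩
  let w := v ^ (M + 1) * star u ^ (M + 2)
  have hu_eval : ∀ x, x ≠ 0 → ψ x u = f x ^ (2 * M + 1) :=
    fun x hx => by simp [ψ, u, hu x hx]
  have hv_eval : ∀ x, x ≠ 0 → ψ x v = f x ^ (2 * M + 3) :=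
    fun x hx => by simp [ψ, v, hv x hx]
  have hx₀ : (fun _ => 1 : Fin n → ℝ) ≠ 0 :=
    fun h => one_ne_zero (congrFun h ⟨0, by omega⟩)
  have hu₀ : u ≠ 0 := fun h =>
    (pow_pos (hpos _ hx₀) _).ne' (by rw [← hu_eval _ hx₀, h, map_zero])
  have hnorm : QuadraticAlgebra.norm u ≠ 0 :=
    (QuadraticAlgebra.norm_eq_zero_iff_of_not_isSquare
      (fun ⟨s, hs⟩ => hDsq ⟨s, by rw [hs, sq]⟩)).not.mpr hu₀
  refine ⟨w.re, w.im, QuadraticAlgebra.norm u ^ (M + 2), pow_ne_zero _ hnorm, fun x hx hr => ?_⟩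
  have hnorm_eval : eval x (QuadraticAlgebra.norm u) = ψ x u * ψ x (star u) := by
    rw [← map_mul, ← QuadraticAlgebra.algebraMap_norm_eq_mul_star]
    simp [ψ]
  have hf_mul_norm : f x * eval x (QuadraticAlgebra.norm u ^ (M + 2)) = ψ x w := by
    rw [map_pow, hnorm_eval, map_mul, map_pow, map_pow, hu_eval x hx, hv_eval x hx]
    ring
  rw [div_mul_eq_mul_div, ← add_div, eq_div_iff hr, hf_mul_norm]
  simp [ψ]

/-- Let `f` be a positive function on `ℝⁿ \ {0}` (`n ≥ 2`), homogeneous of degree 1, and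
`D` a non-negative polynomial which is not a square of a polynomial. If for every large odd
`m` there are polynomials `P_m`, `S_m` with `f^m = P_m + S_m √D` away from the origin, then
`f` itself lies in `F(√D)`: there are rational functions (written here with a common
denominator `r`) such that `f = p/r + (q/r) √D` on `ℝⁿ \ {0}` wherever `r` does not
vanish. -/
theorem positive_homogeneous_lies_in_quadratic_extension (n : ℕ) (hn : 2 ≤ n)
    (f : (Fin n → ℝ) → ℝ)
    (hpos : ∀ x : Fin n → ℝ, x ≠ 0 → 0 < f x)
    (hhom : ∀ a : ℝ, 0 < a → ∀ x : Fin n → ℝ, x ≠ 0 → f (a • x) = a * f x)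
    (D : MvPolynomial (Fin n) ℝ)
    (hD0 : ∀ x : Fin n → ℝ, 0 ≤ eval x D)
    (hDsq : ¬ ∃ s : MvPolynomial (Fin n) ℝ, D = s ^ 2)
    (hM : ∃ M : ℕ, ∀ m : ℕ, M ≤ m → Odd m →
      ∃ P S : MvPolynomial (Fin n) ℝ,
        ∀ x : Fin n → ℝ, x ≠ 0 →
          f x ^ m = eval x P + eval x S * Real.sqrt (eval x D)) :
    ∃ p q r : MvPolynomial (Fin n) ℝ, r ≠ 0 ∧
      ∀ x : Fin n → ℝ, x ≠ 0 → eval x r ≠ 0 →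
        f x = eval x p / eval x r + (eval x q / eval x r) * Real.sqrt (eval x D) :=
  positive_homogeneous_lies_in_quadratic_extension_general n hn f hpos D hD0 hDsq hM
end
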